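/- arXiv:2308.03240 — 3 statements merged into one kernel-verified Lean document; each statement's English description precedes it below -/
import Mathlib

section
/- Let P_C be an n×n real matrix that is weakly diagonally dominant (for every row i, |P_C[i,i]| ≥ Σ_{j≠i} |P_C[i,j]|), and let J be the set of rows that are strictly diagonally dominant. Suppose J is nonempty and for every i ∉ J there exists a finite sequence of indices i, i₁, …, i_r, j with j ∈ J such that all the entries P_C[i,i₁], P_C[i₁,i₂], …, P_C[i_r, j] are nonzero. Then P_C is invertible. -/
/-!
Suppose `P *ᵥ v = 0` with `v ≠ 0` and let `i` be a coordinate where `|v i|` is maximal. Row `i`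
of the equation gives `|P i i| |v i| ≤ ∑_{j ≠ i} |P i j| |v j| ≤ (∑_{j ≠ i} |P i j|) |v i|`, so row
`i` is not strictly dominant; and since it is weakly dominant, both inequalities are equalities,
which forces `|v j| = |v i|` whenever `P i j ≠ 0`. Hence maximality of `|v ·|` propagates along
chains of nonzero entries, and the chain from `i` reaches a strictly dominant row that is also a
maximal coordinate: a contradiction.
-/

open Finset

namespace Matrix

variable {ι K : Type*} [Fintype ι] [DecidableEq ι] [Field K] [LinearOrder K]
  [IsStrictOrderedRing K] {A : Matrix ι ι K} {v : ι → K}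

theorem exists_mulVec_eq_zero_of_det_eq_zero (h : A.det = 0) :
    ∃ v, A *ᵥ v = 0 ∧ ∃ i, v i ≠ 0 ∧ ∀ j, |v j| ≤ |v i| := by
  obtain ⟨v, hv, hAv⟩ := exists_mulVec_eq_zero_iff.mpr h
  obtain ⟨i₀, hi₀⟩ := Function.ne_iff.mp hv
  have : Nonempty ι := ⟨i₀⟩
  obtain ⟨i, hi⟩ := Finite.exists_max fun j => |v j|
  exact ⟨v, hAv, i, fun hvi => hi₀ (abs_nonpos_iff.mp (by simpa [hvi] using hi i₀)), hi⟩

theorem abs_diag_mul_le_sum_of_mulVec_eq_zero (hv : A *ᵥ v = 0) (i : ι) :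
    |A i i| * |v i| ≤ ∑ j ∈ univ.erase i, |A i j| * |v j| := by
  have hrow : A i i * v i = -∑ j ∈ univ.erase i, A i j * v j := by
    rw [eq_neg_iff_add_eq_zero, add_sum_erase _ (fun j => A i j * v j) (mem_univ i)]
    simpa [mulVec, dotProduct] using congrFun hv i
  calc |A i i| * |v i| = |∑ j ∈ univ.erase i, A i j * v j| := by rw [← abs_mul, hrow, abs_neg]
    _ ≤ ∑ j ∈ univ.erase i, |A i j * v j| := abs_sum_le_sum_abs _ _
    _ = ∑ j ∈ univ.erase i, |A i j| * |v j| := by simp only [abs_mul]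

theorem abs_diag_le_sum_of_mulVec_eq_zero {i : ι} (hv : A *ᵥ v = 0) (hvi : v i ≠ 0)
    (hmax : ∀ j, |v j| ≤ |v i|) : |A i i| ≤ ∑ j ∈ univ.erase i, |A i j| := by
  refine le_of_mul_le_mul_right ?_ (abs_pos.mpr hvi)
  calc |A i i| * |v i| ≤ ∑ j ∈ univ.erase i, |A i j| * |v j| :=
        abs_diag_mul_le_sum_of_mulVec_eq_zero hv i
    _ ≤ (∑ j ∈ univ.erase i, |A i j|) * |v i| := by
        rw [sum_mul]
        exact sum_le_sum fun j _ => mul_le_mul_of_nonneg_left (hmax j) (abs_nonneg _)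

theorem abs_eq_of_mulVec_eq_zero_of_ne_zero {i j : ι} (hv : A *ᵥ v = 0)
    (hdom : ∑ k ∈ univ.erase i, |A i k| ≤ |A i i|) (hmax : ∀ k, |v k| ≤ |v i|)
    (hij : A i j ≠ 0) : |v j| = |v i| := by
  rcases eq_or_ne j i with rfl | hji
  · rfl
  by_contra hne
  have hlt : |v j| < |v i| := (hmax j).lt_of_ne hne
  have : ∑ k ∈ univ.erase i, |A i k| * |v k| < |A i i| * |v i| :=
    calc ∑ k ∈ univ.erase i, |A i k| * |v k| < ∑ k ∈ univ.erase i, |A i k| * |v i| :=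
          sum_lt_sum (fun k _ => mul_le_mul_of_nonneg_left (hmax k) (abs_nonneg _))
            ⟨j, mem_erase.mpr ⟨hji, mem_univ j⟩, mul_lt_mul_of_pos_left hlt (abs_pos.mpr hij)⟩
      _ ≤ |A i i| * |v i| := by
          rw [← sum_mul]
          exact mul_le_mul_of_nonneg_right hdom (abs_nonneg _)
  exact this.not_ge (abs_diag_mul_le_sum_of_mulVec_eq_zero hv i)

theorem abs_eq_of_mulVec_eq_zero_of_reflTransGen {i j : ι} (hv : A *ᵥ v = 0)
    (hdom : ∀ k, ∑ l ∈ univ.erase k, |A k l| ≤ |A k k|) (hmax : ∀ k, |v k| ≤ |v i|)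
    (hij : Relation.ReflTransGen (fun a b => A a b ≠ 0) i j) : |v j| = |v i| := by
  induction hij with
  | refl => rfl
  | tail _ hbc ih =>
    rw [← ih]
    exact abs_eq_of_mulVec_eq_zero_of_ne_zero hv (hdom _) (ih ▸ hmax) hbc

end Matrix

theorem shivakumar_chew_nonsingular_general (n : ℕ) (P : Matrix (Fin n) (Fin n) ℝ)
    (hdom : ∀ i, ∑ j ∈ univ.erase i, |P i j| ≤ |P i i|)
    (J : Set (Fin n))
    (hJ : J = {i | ∑ j ∈ univ.erase i, |P i j| < |P i i|})
    (hchain : ∀ i ∉ J, ∃ j ∈ J,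
      Relation.ReflTransGen (fun a b => P a b ≠ 0) i j) :
    IsUnit P := by
  rw [Matrix.isUnit_iff_isUnit_det, isUnit_iff_ne_zero]
  intro hdet
  obtain ⟨v, hv, i, hvi, hmax⟩ := Matrix.exists_mulVec_eq_zero_of_det_eq_zero hdet
  have not_mem_J : ∀ k, v k ≠ 0 → (∀ l, |v l| ≤ |v k|) → k ∉ J := fun k hvk hk hkJ => by
    rw [hJ] at hkJ
    exact (Matrix.abs_diag_le_sum_of_mulVec_eq_zero hv hvk hk).not_gt hkJ
  obtain ⟨j, hjJ, hij⟩ := hchain i (not_mem_J i hvi hmax)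
  have hvj : |v j| = |v i| := Matrix.abs_eq_of_mulVec_eq_zero_of_reflTransGen hv hdom hmax hij
  exact not_mem_J j (abs_ne_zero.mp (hvj ▸ abs_ne_zero.mpr hvi)) (hvj ▸ hmax) hjJ

theorem shivakumar_chew_nonsingular (n : ℕ) (P : Matrix (Fin n) (Fin n) ℝ)
    (hdom : ∀ i, ∑ j ∈ univ.erase i, |P i j| ≤ |P i i|)
    (J : Set (Fin n))
    (hJ : J = {i | ∑ j ∈ univ.erase i, |P i j| < |P i i|})
    (hJne : J.Nonempty)
    (hchain : ∀ i ∉ J, ∃ j ∈ J,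
      Relation.ReflTransGen (fun a b => P a b ≠ 0) i j) :
    IsUnit P :=
  shivakumar_chew_nonsingular_general n P hdom J hJ hchain
end

section
/- Carbon conservation for the whole network: suppose nodal carbon intensities w ∈ ℝⁿ satisfy the carbon flow equations w_i·(Σ_{g∈G_i} P^G_{i,g} + Σ_{k∈N_i⁺} P^i_{ki}) = Σ_{g∈G_i} w^G_{i,g} P^G_{i,g} + Σ_{k∈N_i⁺} w_k P^i_{ki} for every node i, the power balances Σ_{k∈N_i⁺} P^i_{ki} + Σ_g P^G_{i,g} = Σ_{j∈N_i⁻} P^i_{ij} + Σ_l P^L_{i,l} hold, and branch losses satisfy P^i_{ij} = P^j_{ij} + P^loss_{ij} with branch carbon intensity equal to the sending node intensity. Then the total generation emission rate equals the total load-attributed plus loss-attributed emission rate: Σ_i Σ_g w^G_{i,g} P^G_{i,g} = Σ_i Σ_l w_i P^L_{i,l} + Σ_{ij∈E} w_i P^loss_{ij}. -/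
/-!
Every node is a perfect mixer: its inflowing carbon (generation plus received branch flows)
leaves it at the single intensity `w i`, through its loads, its branch losses and the
power its branches deliver downstream. Summing these nodal balances, each branch flow is
counted once as carbon delivered by its sending node and once as carbon received at its
receiving node, both at the sender's intensity, so these terms cancel and only generation,
loads and losses remain.
-/

open Finset

theorem Finset.sum_mul_sum_fiberwise {ι κ R : Type*} [Fintype κ] [DecidableEq κ]
    [NonUnitalNonAssocSemiring R] (s : Finset ι) (g : ι → κ) (f : κ → R) (h : ι → R) :
    ∑ j, f j * ∑ i ∈ s with g i = j, h i = ∑ i ∈ s, f (g i) * h i := by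
  rw [← sum_fiberwise s g]
  refine sum_congr rfl fun j _ => ?_
  rw [mul_sum]
  exact sum_congr rfl fun i hi => by rw [(mem_filter.mp hi).2]

theorem Finset.sum_sum_sub_sum_swap_eq_zero {V M : Type*} [Fintype V] [AddCommGroup M]
    (F : V → V → M) : ∑ i, (∑ j, F i j - ∑ k, F k i) = 0 := by
  rw [sum_sub_distrib, sum_comm, sub_self]

theorem nodal_emission_eq_load_add_loss_add_transport {V : Type*} [Fintype V]
    (w : V → ℝ) (Psend Precv Ploss : V → V → ℝ) (i : V) (gen emission load : ℝ)
    (hloss : ∀ j, Psend i j = Precv i j + Ploss i j)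
    (hbal : ∑ k, Precv k i + gen = ∑ j, Psend i j + load)
    (hcf : w i * (gen + ∑ k, Precv k i) = emission + ∑ k, w k * Precv k i) :
    emission = w i * load + ∑ j, w i * Ploss i j
      + (∑ j, w i * Precv i j - ∑ k, w k * Precv k i) := by
  simp only [hloss, sum_add_distrib] at hbal
  rw [← mul_sum, ← mul_sum]
  linear_combination w i * hbal - hcf

theorem network_carbon_conservation_general
    {V GI LI : Type*} [Fintype V] [Fintype GI] [Fintype LI]
    [DecidableEq V]
    (nodeG : GI → V) (nodeL : LI → V)
    (wG PG : GI → ℝ) (PL : LI → ℝ)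
    (Psend Precv Ploss : V → V → ℝ)
    (w : V → ℝ)
    (hloss : ∀ i j, Psend i j = Precv i j + Ploss i j)
    (hbal : ∀ i, (∑ k, Precv k i) + ∑ g ∈ univ.filter (fun g => nodeG g = i), PG g
      = (∑ j, Psend i j) + ∑ l ∈ univ.filter (fun l => nodeL l = i), PL l)
    (hcf : ∀ i, w i * ((∑ g ∈ univ.filter (fun g => nodeG g = i), PG g) + ∑ k, Precv k i)
      = (∑ g ∈ univ.filter (fun g => nodeG g = i), wG g * PG g) + ∑ k, w k * Precv k i) :
    ∑ g, wG g * PG g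
      = (∑ l, w (nodeL l) * PL l) + ∑ i, ∑ j, w i * Ploss i j := by
  have hnode := fun i => nodal_emission_eq_load_add_loss_add_transport w Psend Precv Ploss i
    _ _ _ (hloss i) (hbal i) (hcf i)
  rw [← sum_fiberwise univ nodeG, sum_congr rfl fun i _ => hnode i, sum_add_distrib,
    sum_add_distrib, sum_sum_sub_sum_swap_eq_zero fun i j => w i * Precv i j, add_zero,
    sum_mul_sum_fiberwise]

theorem network_carbon_conservation
    {V GI LI : Type*} [Fintype V] [Fintype GI] [Fintype LI]
    [DecidableEq V]
    (nodeG : GI → V) (nodeL : LI → V)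
    (wG PG : GI → ℝ) (PL : LI → ℝ)
    (Psend Precv Ploss : V → V → ℝ)
    (w : V → ℝ)
    (hPG : ∀ g, 0 ≤ PG g) (hPL : ∀ l, 0 ≤ PL l)
    (hPsend : ∀ i j, 0 ≤ Psend i j) (hPrecv : ∀ i j, 0 ≤ Precv i j)
    (hloss : ∀ i j, Psend i j = Precv i j + Ploss i j)
    (hbal : ∀ i, (∑ k, Precv k i) + ∑ g ∈ univ.filter (fun g => nodeG g = i), PG g
      = (∑ j, Psend i j) + ∑ l ∈ univ.filter (fun l => nodeL l = i), PL l)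
    (hcf : ∀ i, w i * ((∑ g ∈ univ.filter (fun g => nodeG g = i), PG g) + ∑ k, Precv k i)
      = (∑ g ∈ univ.filter (fun g => nodeG g = i), wG g * PG g) + ∑ k, w k * Precv k i) :
    ∑ g, wG g * PG g
      = (∑ l, w (nodeL l) * PL l) + ∑ i, ∑ j, w i * Ploss i j :=
  network_carbon_conservation_general nodeG nodeL wG PG PL Psend Precv Ploss w hloss hbal hcf
end

section
/- If the carbon flow matrix P_C = P_N − P_B satisfies the invertibility condition (weak diagonal dominance with nonempty strictly dominant set J and chains of nonzero entries from every row to J), then for any nonnegative generation emission vector r_G ≥ 0, the system P_C w = r_G has a unique solution w, and this solution satisfies w ≥ 0 componentwise. -/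
/-!
Since the off-diagonal entries of `P` are nonpositive, weak diagonal dominance says that every
row sum is nonnegative and the strictly dominant rows `J` are those with positive row sum. If
`P w ≥ 0` but `w` has a negative minimum `m`, then at every row `i` where `m` is attained,
`(P w) i = (row sum) · m + ∑ P i j (w j - m)` is a sum of two nonpositive terms, so both vanish:
row `i` is not strictly dominant and `w j = m` whenever `P i j ≠ 0`. The minimum therefore spreads
along chains of nonzero entries into `J`, which is absurd. Hence `P w ≥ 0 → w ≥ 0`; applied to
`±w` this makes `P` injective, hence invertible, and the solution of `P w = r` is nonnegative.
-/

open Finset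

namespace Matrix

variable {ι R : Type*} [Fintype ι] [CommRing R]

lemma mulVec_apply_eq_sum_row_mul_add (A : Matrix ι ι R) (w : ι → R) (c : R) (i : ι) :
    (A *ᵥ w) i = (∑ j, A i j) * c + ∑ j, A i j * (w j - c) := by
  simp only [mulVec, dotProduct, sum_mul, ← sum_add_distrib]
  exact sum_congr rfl fun j _ => by ring

variable [LinearOrder R] [IsStrictOrderedRing R]

lemma sum_row_eq_abs_diag_sub_sum_abs [DecidableEq ι] {A : Matrix ι ι R}
    (hdiag : ∀ i, 0 ≤ A i i) (hoff : ∀ i j, i ≠ j → A i j ≤ 0) (i : ι) :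
    ∑ j, A i j = |A i i| - ∑ j ∈ univ.erase i, |A i j| := by
  rw [← add_sum_erase _ _ (mem_univ i), abs_of_nonneg (hdiag i), sub_eq_add_neg,
    ← sum_neg_distrib]
  congr 1
  refine sum_congr rfl fun j hj => ?_
  rw [abs_of_nonpos (hoff i j (ne_of_mem_erase hj).symm), neg_neg]

lemma sum_row_eq_zero_and_eq_of_neg_min {A : Matrix ι ι R} (hoff : ∀ i j, i ≠ j → A i j ≤ 0)
    {w : ι → R} {i : ι} (hmin : ∀ j, w i ≤ w j) (hneg : w i < 0)
    (hrow : 0 ≤ ∑ j, A i j) (hAw : 0 ≤ (A *ᵥ w) i) :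
    ∑ j, A i j = 0 ∧ ∀ j, A i j ≠ 0 → w j = w i := by
  have hterm : ∀ j ∈ univ, A i j * (w j - w i) ≤ 0 := fun j _ => by
    by_cases hji : j = i
    · simp [hji]
    · exact mul_nonpos_of_nonpos_of_nonneg (hoff i j (Ne.symm hji)) (sub_nonneg.2 (hmin j))
  have hspread : ∑ j, A i j * (w j - w i) ≤ 0 := sum_nonpos hterm
  have hscaled : (∑ j, A i j) * w i ≤ 0 := mul_nonpos_of_nonneg_of_nonpos hrow hneg.le
  rw [mulVec_apply_eq_sum_row_mul_add A w (w i)] at hAw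
  refine ⟨?_, fun j hj => ?_⟩
  · exact (mul_eq_zero.1 (by linarith : (∑ j, A i j) * w i = 0)).resolve_right hneg.ne
  · have hzero := (sum_eq_zero_iff_of_nonpos hterm).1 (by linarith) j (mem_univ j)
    exact sub_eq_zero.1 ((mul_eq_zero.1 hzero).resolve_left hj)

theorem nonneg_of_mulVec_nonneg {A : Matrix ι ι R} (hoff : ∀ i j, i ≠ j → A i j ≤ 0)
    (hrow : ∀ i, 0 ≤ ∑ j, A i j)
    (hchain : ∀ i, ∃ j, 0 < ∑ k, A j k ∧ Relation.ReflTransGen (fun a b => A a b ≠ 0) i j)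
    {w : ι → R} (hAw : 0 ≤ A *ᵥ w) : 0 ≤ w := by
  by_contra hw
  obtain ⟨i, hi⟩ : ∃ i, w i < 0 := by simpa [Pi.le_def] using hw
  have : Nonempty ι := ⟨i⟩
  obtain ⟨i₀, hmin⟩ := Finite.exists_min w
  have hneg : w i₀ < 0 := (hmin i).trans_lt hi
  have hmin_closed : ∀ b, Relation.ReflTransGen (fun a b => A a b ≠ 0) i₀ b → w b = w i₀ := by
    intro b hpath
    induction hpath with
    | refl => rfl
    | tail _ hab ih =>
      exact ((sum_row_eq_zero_and_eq_of_neg_min hoff (ih ▸ hmin) (ih ▸ hneg) (hrow _)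
        (hAw _)).2 _ hab).trans ih
  obtain ⟨j, hj, hpath⟩ := hchain i₀
  have hwj := hmin_closed j hpath
  exact hj.ne' (sum_row_eq_zero_and_eq_of_neg_min hoff (hwj ▸ hmin) (hwj ▸ hneg) (hrow j)
    (hAw j)).1

theorem mulVec_injective_of_nonneg_of_mulVec_nonneg {A : Matrix ι ι R}
    (hmono : ∀ w, 0 ≤ A *ᵥ w → 0 ≤ w) : Function.Injective A.mulVec := by
  refine (injective_iff_map_eq_zero A.mulVecLin).2 fun v hv => ?_
  rw [mulVecLin_apply] at hv
  have hpos : 0 ≤ v := hmono v hv.ge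
  have hneg : 0 ≤ -v := hmono (-v) (by rw [mulVec_neg, hv, neg_zero])
  exact le_antisymm (neg_nonneg.1 hneg) hpos

end Matrix

open Matrix

theorem carbon_flow_unique_nonneg_solution_general (n : ℕ)
    (P : Matrix (Fin n) (Fin n) ℝ)
    (hdom : ∀ i, ∑ j ∈ univ.erase i, |P i j| ≤ |P i i|)
    (hdiag : ∀ i, 0 ≤ P i i)
    (hoff : ∀ i j, i ≠ j → P i j ≤ 0)
    (J : Set (Fin n))
    (hJ : J = {i | ∑ j ∈ univ.erase i, |P i j| < |P i i|})
    (hchain : ∀ i ∉ J, ∃ j ∈ J,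
      Relation.ReflTransGen (fun a b => P a b ≠ 0) i j)
    (r : Fin n → ℝ) (hr : ∀ i, 0 ≤ r i) :
    ∃ w : Fin n → ℝ, (P.mulVec w = r ∧ ∀ i, 0 ≤ w i) ∧
      ∀ w' : Fin n → ℝ, P.mulVec w' = r → w' = w := by
  have hrow := sum_row_eq_abs_diag_sub_sum_abs hdiag hoff
  have hJ_iff : ∀ i, i ∈ J ↔ 0 < ∑ j, P i j := fun i => by
    rw [hJ, Set.mem_ofPred_eq, hrow, sub_pos]
  have hchain' : ∀ i, ∃ j, 0 < ∑ k, P j k ∧ Relation.ReflTransGen (fun a b => P a b ≠ 0) i j := by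
    intro i
    by_cases hi : i ∈ J
    · exact ⟨i, (hJ_iff i).1 hi, .refl⟩
    · obtain ⟨j, hj, hpath⟩ := hchain i hi
      exact ⟨j, (hJ_iff j).1 hj, hpath⟩
  have hmono : ∀ w, 0 ≤ P *ᵥ w → 0 ≤ w := fun w =>
    nonneg_of_mulVec_nonneg hoff (fun i => by rw [hrow]; linarith [hdom i]) hchain'
  have hinj := mulVec_injective_of_nonneg_of_mulVec_nonneg hmono
  obtain ⟨w, hw⟩ := mulVec_surjective_iff_isUnit.2 (mulVec_injective_iff_isUnit.1 hinj) r
  exact ⟨w, ⟨hw, hmono w (hw ▸ hr)⟩, fun w' hw' => hinj (hw'.trans hw.symm)⟩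

theorem carbon_flow_unique_nonneg_solution (n : ℕ)
    (P : Matrix (Fin n) (Fin n) ℝ)
    (hdom : ∀ i, ∑ j ∈ univ.erase i, |P i j| ≤ |P i i|)
    (hdiag : ∀ i, 0 ≤ P i i)
    (hoff : ∀ i j, i ≠ j → P i j ≤ 0)
    (J : Set (Fin n))
    (hJ : J = {i | ∑ j ∈ univ.erase i, |P i j| < |P i i|})
    (hJne : J.Nonempty)
    (hchain : ∀ i ∉ J, ∃ j ∈ J,
      Relation.ReflTransGen (fun a b => P a b ≠ 0) i j)
    (r : Fin n → ℝ) (hr : ∀ i, 0 ≤ r i) :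
    ∃ w : Fin n → ℝ, (P.mulVec w = r ∧ ∀ i, 0 ≤ w i) ∧
      ∀ w' : Fin n → ℝ, P.mulVec w' = r → w' = w :=
  carbon_flow_unique_nonneg_solution_general n P hdom hdiag hoff J hJ hchain r hr
end
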